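/- arXiv:2505.03993 — 2 statements merged into one kernel-verified Lean document; each statement's English description precedes it below -/
import Mathlib

section
/- Let u : Y → G be a homomorphism of abelian groups and let m, n ≥ 1 be integers. Assume that Y is torsion-free and that G is divisible. For any integer k ≥ 1, define Q_u[k] to be the quotient of the subgroup {(y, g) ∈ Y ⊕ G : u(y) = k·g} by the subgroup {(k·y, u(y)) : y ∈ Y}. Then the maps α : Q_u[m] → Q_u[mn], sending the class of (y, g) to the class of (n·y, g), and β : Q_u[mn] → Q_u[n], sending the class of (y, g) to the class of (y, m·g), are well-defined group homomorphisms, and the sequence 0 → Q_u[m] → Q_u[mn] → Q_u[n] → 0 is exact. -/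
/-- The subgroup `{(y, g) ∈ Y ⊕ G : u(y) = k • g}` of `Y × G`. -/
def motiveKer {Y G : Type*} [AddCommGroup Y] [AddCommGroup G] (u : Y →+ G) (k : ℕ) :
    AddSubgroup (Y × G) where
  carrier := {p | u p.1 = k • p.2}
  zero_mem' := by simp
  add_mem' := by
    intro a b ha hb
    simp only [Set.mem_setOf_eq, Prod.fst_add, Prod.snd_add, map_add, smul_add] at *
    rw [ha, hb]
  neg_mem' := by
    intro a ha
    simp only [Set.mem_setOf_eq, Prod.fst_neg, Prod.snd_neg, map_neg, smul_neg] at *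
    rw [ha]

/-- The subgroup `{(k • y, u(y)) : y ∈ Y}` of `Y × G`. -/
def motiveIm {Y G : Type*} [AddCommGroup Y] [AddCommGroup G] (u : Y →+ G) (k : ℕ) :
    AddSubgroup (Y × G) :=
  AddMonoidHom.range ((k • AddMonoidHom.id Y).prod u)

/-- `Q_u[k]`: the quotient of `{(y, g) ∈ Y ⊕ G : u(y) = k • g}` by `{(k • y, u(y)) : y ∈ Y}`. -/
abbrev motiveTorsion {Y G : Type*} [AddCommGroup Y] [AddCommGroup G] (u : Y →+ G) (k : ℕ) :
    Type _ :=
  motiveKer u k ⧸ (motiveIm u k).addSubgroupOf (motiveKer u k)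

lemma mem_motiveIm_iff {Y G : Type*} [AddCommGroup Y] [AddCommGroup G] (u : Y →+ G) (k : ℕ)
    (p : Y × G) : p ∈ motiveIm u k ↔ ∃ y, (k • y, u y) = p := by
  simp [motiveIm, AddMonoidHom.prod_apply]

/-- the map on kernels underlying `α`. -/
def mapA {Y G : Type*} [AddCommGroup Y] [AddCommGroup G] (u : Y →+ G) (m n : ℕ) :
    motiveKer u m →+ motiveKer u (m * n) where
  toFun p := ⟨(n • p.1.1, p.1.2), by
    have h : u p.1.1 = m • p.1.2 := p.2
    show u (n • p.1.1) = (m * n) • p.1.2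
    rw [map_nsmul, h, smul_smul, mul_comm n m]⟩
  map_zero' := by ext <;> simp
  map_add' p q := by ext <;> simp

/-- the map on kernels underlying `β`. -/
def mapB {Y G : Type*} [AddCommGroup Y] [AddCommGroup G] (u : Y →+ G) (m n : ℕ) :
    motiveKer u (m * n) →+ motiveKer u n where
  toFun p := ⟨(p.1.1, m • p.1.2), by
    have h : u p.1.1 = (m * n) • p.1.2 := p.2
    show u p.1.1 = n • m • p.1.2
    rw [h, smul_smul, mul_comm n m]⟩
  map_zero' := by ext <;> simp
  map_add' p q := by ext <;> simp

/-- Let `u : Y → G` be a homomorphism of abelian groups and `m, n ≥ 1`.  Assume `Y` is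
torsion-free and `G` is divisible.  Then there are well-defined group homomorphisms
`α : Q_u[m] → Q_u[mn]`, sending the class of `(y, g)` to the class of `(n • y, g)`, and
`β : Q_u[mn] → Q_u[n]`, sending the class of `(y, g)` to the class of `(y, m • g)`, and
the sequence `0 → Q_u[m] → Q_u[mn] → Q_u[n] → 0` is exact. -/
theorem motiveTorsion_multiplicative_exact_sequence
    {Y G : Type*} [AddCommGroup Y] [AddCommGroup G] (u : Y →+ G) (m n : ℕ)
    (hm : 1 ≤ m) (hn : 1 ≤ n)
    (hY : ∀ (k : ℕ) (y : Y), k ≠ 0 → k • y = 0 → y = 0)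
    (hG : ∀ (k : ℕ), 1 ≤ k → ∀ g : G, ∃ g' : G, k • g' = g) :
    ∃ (α : motiveTorsion u m →+ motiveTorsion u (m * n))
      (β : motiveTorsion u (m * n) →+ motiveTorsion u n),
      (∀ (y : Y) (g : G) (h₁ : (y, g) ∈ motiveKer u m)
          (h₂ : (n • y, g) ∈ motiveKer u (m * n)),
        α (QuotientAddGroup.mk ⟨(y, g), h₁⟩) = QuotientAddGroup.mk ⟨(n • y, g), h₂⟩) ∧
      (∀ (y : Y) (g : G) (h₁ : (y, g) ∈ motiveKer u (m * n))
          (h₂ : (y, m • g) ∈ motiveKer u n),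
        β (QuotientAddGroup.mk ⟨(y, g), h₁⟩) = QuotientAddGroup.mk ⟨(y, m • g), h₂⟩) ∧
      Function.Injective α ∧ Function.Surjective β ∧ α.range = β.ker := by
  have hA : (motiveIm u m).addSubgroupOf (motiveKer u m) ≤
      ((motiveIm u (m * n)).addSubgroupOf (motiveKer u (m * n))).comap (mapA u m n) := by
    intro p hp
    rw [AddSubgroup.mem_addSubgroupOf, mem_motiveIm_iff] at hp
    obtain ⟨z, hz⟩ := hp
    rw [AddSubgroup.mem_comap, AddSubgroup.mem_addSubgroupOf, mem_motiveIm_iff]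
    refine ⟨z, ?_⟩
    have h1 : m • z = p.1.1 := congrArg Prod.fst hz
    have h2 : u z = p.1.2 := congrArg Prod.snd hz
    show ((m * n) • z, u z) = (n • p.1.1, p.1.2)
    rw [← h1, ← h2, smul_smul, mul_comm m n]
  have hB : (motiveIm u (m * n)).addSubgroupOf (motiveKer u (m * n)) ≤
      ((motiveIm u n).addSubgroupOf (motiveKer u n)).comap (mapB u m n) := by
    intro p hp
    rw [AddSubgroup.mem_addSubgroupOf, mem_motiveIm_iff] at hp
    obtain ⟨z, hz⟩ := hp
    rw [AddSubgroup.mem_comap, AddSubgroup.mem_addSubgroupOf, mem_motiveIm_iff]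
    refine ⟨m • z, ?_⟩
    have h1 : (m * n) • z = p.1.1 := congrArg Prod.fst hz
    have h2 : u z = p.1.2 := congrArg Prod.snd hz
    show (n • m • z, u (m • z)) = (p.1.1, m • p.1.2)
    rw [map_nsmul, h2, smul_smul, mul_comm n m, h1]
  refine ⟨QuotientAddGroup.map _ _ (mapA u m n) hA,
    QuotientAddGroup.map _ _ (mapB u m n) hB, ?_, ?_, ?_, ?_, ?_⟩
  · intro y g h₁ h₂
    rw [QuotientAddGroup.map_mk]
    rfl
  · intro y g h₁ h₂
    rw [QuotientAddGroup.map_mk]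
    rfl
  · rw [injective_iff_map_eq_zero]
    intro q
    induction q using QuotientAddGroup.induction_on with
    | H p =>
      intro hq
      rw [QuotientAddGroup.map_mk, QuotientAddGroup.eq_zero_iff,
        AddSubgroup.mem_addSubgroupOf, mem_motiveIm_iff] at hq
      obtain ⟨z, hz⟩ := hq
      have h1 : (m * n) • z = n • p.1.1 := congrArg Prod.fst hz
      have h2 : u z = p.1.2 := congrArg Prod.snd hz
      rw [QuotientAddGroup.eq_zero_iff, AddSubgroup.mem_addSubgroupOf, mem_motiveIm_iff]
      refine ⟨z, ?_⟩
      have hy : p.1.1 = m • z := by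
        have : n • (p.1.1 - m • z) = 0 := by
          rw [smul_sub, smul_smul, mul_comm n m, h1, sub_self]
        exact sub_eq_zero.mp (hY n _ (by omega) this)
      show (m • z, u z) = (p : Y × G)
      rw [← hy, h2]
  · intro q
    induction q using QuotientAddGroup.induction_on with
    | H p =>
      obtain ⟨g', hg'⟩ := hG m hm p.1.2
      have hk : (p.1.1, g') ∈ motiveKer u (m * n) := by
        show u p.1.1 = (m * n) • g'
        have h : u p.1.1 = n • p.1.2 := p.2
        rw [h, ← hg', smul_smul, mul_comm n m]
      refine ⟨QuotientAddGroup.mk ⟨(p.1.1, g'), hk⟩, ?_⟩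
      rw [QuotientAddGroup.map_mk]
      congr 1
      ext
      · rfl
      · exact hg'
  · ext q
    rw [AddMonoidHom.mem_range, AddMonoidHom.mem_ker]
    constructor
    · rintro ⟨r, rfl⟩
      induction r using QuotientAddGroup.induction_on with
      | H p =>
        rw [QuotientAddGroup.map_mk, QuotientAddGroup.map_mk, QuotientAddGroup.eq_zero_iff,
          AddSubgroup.mem_addSubgroupOf, mem_motiveIm_iff]
        refine ⟨p.1.1, ?_⟩
        have h : u p.1.1 = m • p.1.2 := p.2
        show (n • p.1.1, u p.1.1) = (n • p.1.1, m • p.1.2)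
        rw [h]
    · intro hq
      induction q using QuotientAddGroup.induction_on with
      | H p =>
        rw [QuotientAddGroup.map_mk, QuotientAddGroup.eq_zero_iff,
          AddSubgroup.mem_addSubgroupOf, mem_motiveIm_iff] at hq
        obtain ⟨w, hw⟩ := hq
        have h1 : n • w = p.1.1 := congrArg Prod.fst hw
        have h2 : u w = m • p.1.2 := congrArg Prod.snd hw
        refine ⟨QuotientAddGroup.mk ⟨(w, p.1.2), h2⟩, ?_⟩
        rw [QuotientAddGroup.map_mk]
        congr 1
        ext
        · exact h1
        · rfl
end

section
/- Let n ≥ 1 be an integer, and let A and B be finite abelian groups killed by n, equipped with chains of subgroups A₂ ⊆ A₁ ⊆ A and B₂ ⊆ B₁ ⊆ B. Let e : A × B → Z/nZ be a bi-additive pairing such that e(a, b) = 0 whenever (a ∈ A₁ and b ∈ B₂) or (a ∈ A₂ and b ∈ B₁). Then e induces well-defined bi-additive pairings e₀ : (A/A₁) × B₂ → Z/nZ, e₁ : (A₁/A₂) × (B₁/B₂) → Z/nZ, and e₂ : A₂ × (B/B₁) → Z/nZ. If e₀, e₁, and e₂ are all perfect, then e is perfect. -/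
/-- A bi-additive pairing `e : A × B → ZMod n` between abelian groups is *perfect* if both
induced homomorphisms `A → Hom(B, ZMod n)`, `a ↦ e a`, and `B → Hom(A, ZMod n)`,
`b ↦ e (−) b`, are bijective. -/
def IsPerfectPairing {n : ℕ} {A B : Type*} [AddCommGroup A] [AddCommGroup B]
    (e : A →+ B →+ ZMod n) : Prop :=
  Function.Bijective e ∧ Function.Bijective e.flip

/-!
Injectivity: if `e a = 0`, perfectness of `e₀` puts `a` in `A₁`, then that of `e₁` puts it in
`A₂`, and that of `e₂` makes it zero. Surjectivity: a functional `φ` on `B` is matched on `B₂`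
by some `e a₀`, the error `φ - e a₀` kills `B₂` and is matched on `B₁` by some `e a₁`, and the
new error kills `B₁`, so it is `e a₂` for some `a₂ ∈ A₂`. The same argument applied to the
flipped pairing, whose graded pieces are the flipped `e₂, e₁, e₀`, handles the other side.
-/

open QuotientAddGroup

namespace AddMonoidHom

variable {A B M : Type*} [AddCommGroup A] [AddCommGroup B] [AddCommGroup M]
  {A₁ A₂ : AddSubgroup A} {B₁ B₂ : AddSubgroup B} (e : A →+ B →+ M)

def filtrationGr₀ (hvan₁ : ∀ a ∈ A₁, ∀ b ∈ B₂, e a b = 0) : (A ⧸ A₁) →+ B₂ →+ M :=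
  lift A₁ (e.compl₂ B₂.subtype) fun a ha => ext fun b => hvan₁ a ha b b.2

def filtrationGr₁ (hvan₁ : ∀ a ∈ A₁, ∀ b ∈ B₂, e a b = 0)
    (hvan₂ : ∀ a ∈ A₂, ∀ b ∈ B₁, e a b = 0) :
    (A₁ ⧸ A₂.addSubgroupOf A₁) →+ (B₁ ⧸ B₂.addSubgroupOf B₁) →+ M :=
  lift (A₂.addSubgroupOf A₁)
    (lift (B₂.addSubgroupOf B₁) ((e.comp A₁.subtype).compl₂ B₁.subtype).flip
      fun b hb => ext fun a => hvan₁ a a.2 b hb).flip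
    fun a ha => by
      ext b
      exact hvan₂ a ha b b.2

def filtrationGr₂ (hvan₂ : ∀ a ∈ A₂, ∀ b ∈ B₁, e a b = 0) : A₂ →+ (B ⧸ B₁) →+ M :=
  (lift B₁ (e.comp A₂.subtype).flip fun b hb => ext fun a => hvan₂ a a.2 b hb).flip

variable {e₀ : (A ⧸ A₁) →+ B₂ →+ M}
  {e₁ : (A₁ ⧸ A₂.addSubgroupOf A₁) →+ (B₁ ⧸ B₂.addSubgroupOf B₁) →+ M}
  {e₂ : A₂ →+ (B ⧸ B₁) →+ M}

theorem injective_of_injective_on_filtration (h₀ : ∀ (a : A) (b : B₂), e₀ a b = e a b)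
    (h₁ : ∀ (a : A₁) (b : B₁), e₁ a b = e a b)
    (h₂ : ∀ (a : A₂) (b : B), e₂ a b = e a b)
    (inj₀ : Function.Injective e₀) (inj₁ : Function.Injective e₁)
    (inj₂ : Function.Injective e₂) : Function.Injective e := by
  refine (injective_iff_map_eq_zero e).mpr fun a ha => ?_
  have ha₁ : a ∈ A₁ := (eq_zero_iff a).mp <| (injective_iff_map_eq_zero e₀).mp inj₀ _ <| by
    ext b
    simp [h₀, ha]
  have ha₂ : a ∈ A₂ := AddSubgroup.mem_addSubgroupOf.mp <| (eq_zero_iff (⟨a, ha₁⟩ : A₁)).mp <|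
    (injective_iff_map_eq_zero e₁).mp inj₁ _ <| by
      ext b
      simp [h₁, ha]
  refine congrArg Subtype.val <| (injective_iff_map_eq_zero e₂).mp inj₂ ⟨a, ha₂⟩ ?_
  ext b
  simp [h₂, ha]

theorem surjective_of_surjective_on_filtration (h₀ : ∀ (a : A) (b : B₂), e₀ a b = e a b)
    (h₁ : ∀ (a : A₁) (b : B₁), e₁ a b = e a b)
    (h₂ : ∀ (a : A₂) (b : B), e₂ a b = e a b)
    (surj₀ : Function.Surjective e₀) (surj₁ : Function.Surjective e₁)
    (surj₂ : Function.Surjective e₂) : Function.Surjective e := by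
  intro φ
  obtain ⟨x₀, hx₀⟩ := surj₀ (φ.comp B₂.subtype)
  obtain ⟨a₀, rfl⟩ := QuotientAddGroup.mk_surjective x₀
  have ha₀ (b : B₂) : e a₀ b = φ b := (h₀ a₀ b).symm.trans (DFunLike.congr_fun hx₀ b)
  obtain ⟨x₁, hx₁⟩ := surj₁ <| lift (B₂.addSubgroupOf B₁) ((φ - e a₀).comp B₁.subtype)
    fun b hb => sub_eq_zero.mpr (ha₀ ⟨b, hb⟩).symm
  obtain ⟨a₁, rfl⟩ := QuotientAddGroup.mk_surjective x₁
  have ha₁ (b : B₁) : e a₁ b = (φ - e a₀) b :=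
    (h₁ a₁ b).symm.trans (DFunLike.congr_fun hx₁ (b : B₁ ⧸ B₂.addSubgroupOf B₁))
  obtain ⟨a₂, hx₂⟩ := surj₂ <| lift B₁ (φ - e a₀ - e a₁)
    fun b hb => sub_eq_zero.mpr (ha₁ ⟨b, hb⟩).symm
  have ha₂ (b : B) : e a₂ b = (φ - e a₀ - e a₁) b :=
    (h₂ a₂ b).symm.trans (DFunLike.congr_fun hx₂ (b : B ⧸ B₁))
  refine ⟨a₀ + a₁ + a₂, ext fun b => ?_⟩
  rw [map_add, map_add, add_apply, add_apply, ha₂, sub_apply, sub_apply]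
  abel

theorem bijective_of_bijective_on_filtration (h₀ : ∀ (a : A) (b : B₂), e₀ a b = e a b)
    (h₁ : ∀ (a : A₁) (b : B₁), e₁ a b = e a b)
    (h₂ : ∀ (a : A₂) (b : B), e₂ a b = e a b)
    (bij₀ : Function.Bijective e₀) (bij₁ : Function.Bijective e₁)
    (bij₂ : Function.Bijective e₂) : Function.Bijective e :=
  ⟨e.injective_of_injective_on_filtration h₀ h₁ h₂ bij₀.1 bij₁.1 bij₂.1,
    e.surjective_of_surjective_on_filtration h₀ h₁ h₂ bij₀.2 bij₁.2 bij₂.2⟩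

end AddMonoidHom

theorem perfect_of_perfect_on_filtration_general
    (n : ℕ) {A B : Type*} [AddCommGroup A] [AddCommGroup B]
    (A₁ A₂ : AddSubgroup A) (B₁ B₂ : AddSubgroup B)
    (e : A →+ B →+ ZMod n)
    (hvan₁ : ∀ a ∈ A₁, ∀ b ∈ B₂, e a b = 0)
    (hvan₂ : ∀ a ∈ A₂, ∀ b ∈ B₁, e a b = 0) :
    ∃ (e₀ : (A ⧸ A₁) →+ B₂ →+ ZMod n)
      (e₁ : (A₁ ⧸ A₂.addSubgroupOf A₁) →+ (B₁ ⧸ B₂.addSubgroupOf B₁) →+ ZMod n)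
      (e₂ : A₂ →+ (B ⧸ B₁) →+ ZMod n),
      (∀ (a : A) (b : B₂), e₀ (QuotientAddGroup.mk a) b = e a b) ∧
      (∀ (a : A₁) (b : B₁),
        e₁ (QuotientAddGroup.mk a) (QuotientAddGroup.mk b) = e a b) ∧
      (∀ (a : A₂) (b : B), e₂ a (QuotientAddGroup.mk b) = e a b) ∧
      (IsPerfectPairing e₀ → IsPerfectPairing e₁ → IsPerfectPairing e₂ →
        IsPerfectPairing e) := by
  refine ⟨e.filtrationGr₀ hvan₁, e.filtrationGr₁ hvan₁ hvan₂, e.filtrationGr₂ hvan₂,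
    fun _ _ => rfl, fun _ _ => rfl, fun _ _ => rfl, ?_⟩
  rintro ⟨left₀, right₀⟩ ⟨left₁, right₁⟩ ⟨left₂, right₂⟩
  exact ⟨e.bijective_of_bijective_on_filtration (fun _ _ => rfl) (fun _ _ => rfl)
      (fun _ _ => rfl) left₀ left₁ left₂,
    e.flip.bijective_of_bijective_on_filtration (fun _ _ => rfl) (fun _ _ => rfl)
      (fun _ _ => rfl) right₂ right₁ right₀⟩

/-- Let `n ≥ 1` and let `A`, `B` be finite abelian groups killed by `n`, with chains of
subgroups `A₂ ⊆ A₁ ⊆ A` and `B₂ ⊆ B₁ ⊆ B`.  Let `e : A × B → ZMod n` be a bi-additive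
pairing vanishing on `A₁ × B₂` and on `A₂ × B₁`.  Then `e` induces well-defined bi-additive
pairings `e₀ : (A/A₁) × B₂ → ZMod n`, `e₁ : (A₁/A₂) × (B₁/B₂) → ZMod n`, and
`e₂ : A₂ × (B/B₁) → ZMod n`; and if `e₀`, `e₁`, `e₂` are all perfect, then `e` is
perfect. -/
theorem perfect_of_perfect_on_filtration
    (n : ℕ) (hn : 1 ≤ n) {A B : Type*} [AddCommGroup A] [AddCommGroup B]
    [Finite A] [Finite B] (hA : ∀ a : A, n • a = 0) (hB : ∀ b : B, n • b = 0)
    (A₁ A₂ : AddSubgroup A) (B₁ B₂ : AddSubgroup B) (hA₂₁ : A₂ ≤ A₁) (hB₂₁ : B₂ ≤ B₁)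
    (e : A →+ B →+ ZMod n)
    (hvan₁ : ∀ a ∈ A₁, ∀ b ∈ B₂, e a b = 0)
    (hvan₂ : ∀ a ∈ A₂, ∀ b ∈ B₁, e a b = 0) :
    ∃ (e₀ : (A ⧸ A₁) →+ B₂ →+ ZMod n)
      (e₁ : (A₁ ⧸ A₂.addSubgroupOf A₁) →+ (B₁ ⧸ B₂.addSubgroupOf B₁) →+ ZMod n)
      (e₂ : A₂ →+ (B ⧸ B₁) →+ ZMod n),
      (∀ (a : A) (b : B₂), e₀ (QuotientAddGroup.mk a) b = e a b) ∧
      (∀ (a : A₁) (b : B₁),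
        e₁ (QuotientAddGroup.mk a) (QuotientAddGroup.mk b) = e a b) ∧
      (∀ (a : A₂) (b : B), e₂ a (QuotientAddGroup.mk b) = e a b) ∧
      (IsPerfectPairing e₀ → IsPerfectPairing e₁ → IsPerfectPairing e₂ →
        IsPerfectPairing e) :=
  perfect_of_perfect_on_filtration_general n A₁ A₂ B₁ B₂ e hvan₁ hvan₂
end
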